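/- Let c be a configuration of K_n (n ≥ 2) with sorted chip counts c₁ ≥ … ≥ c_n, all at most n−1, that is not volatile. Then there exists an index i with c_i ≤ n−i−1, and the number of additional chips needed to make the configuration volatile is exactly Σ_{i=1}^{n} max(n−i−c_i, 0). -/

import Mathlib

/-- Firing vertex `v` in `K_n`: remove `n-1` chips from `v`, add one chip to each other vertex. -/
def fireK (n : ℕ) (c : Fin n → ℕ) (v : Fin n) : Fin n → ℕ :=
  fun u => if u = v then c v - (n - 1) else c u + 1

/-- Configuration after firing `f 0, …, f (m-1)` in order in `K_n`. -/
def fireIterK (n : ℕ) (c : Fin n → ℕ) (f : ℕ → Fin n) : ℕ → Fin n → ℕ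
  | 0 => c
  | m + 1 => fireK n (fireIterK n c f m) (f m)

/-- A configuration of `K_n` is volatile if it admits an infinite legal firing sequence. -/
def VolatileK (n : ℕ) (c : Fin n → ℕ) : Prop :=
  ∃ f : ℕ → Fin n, ∀ m : ℕ, n - 1 ≤ fireIterK n c f m (f m)

/-- Configuration after firing a finite list of vertices in order in `K_n`. -/
def fireListK (n : ℕ) : (Fin n → ℕ) → List (Fin n) → (Fin n → ℕ)
  | c, [] => c
  | c, v :: l => fireListK n (fireK n c v) l

/-- A finite firing list in `K_n` is legal if each fired vertex has at least `n-1` chips. -/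
def LegalListK (n : ℕ) : (Fin n → ℕ) → List (Fin n) → Prop
  | _, [] => True
  | c, v :: l => n - 1 ≤ c v ∧ LegalListK n (fireK n c v) l

/-!
A capped configuration `d` of `K_n` is volatile iff its vertices can be listed as
`σ 0, …, σ (n-1)` with `d (σ j) + j ≥ n - 1`. Round-robin firing in that order is then legal
forever; conversely, the first `n` vertices fired in a legal sequence are distinct, the `j`-th
of them having received just `j` chips before firing. So raising `c i` to
`max (c i) (n - 1 - i)` suffices, and for any volatile `d ≥ c` with such a `σ`,
`∑ (d - c) ≥ ∑ⱼ (n - 1 - j - c (σ j)) ≥ ∑ⱼ (n - 1 - j - c j)`. The last step is the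
rearrangement inequality: writing `a - b = ∑ₛ [s < a] [b ≤ s]` turns each sum into sums of
products of two oppositely ordered sequences.
-/

open Finset Equiv

theorem tsub_eq_sum_range_ite_mul_ite {a N : ℕ} (b : ℕ) (h : a ≤ N) :
    a - b = ∑ s ∈ range N, (if s < a then 1 else 0) * (if b ≤ s then 1 else 0) := by
  simp only [ite_zero_mul_ite_zero, one_mul, sum_boole, Nat.cast_id]
  rw [← Nat.card_Ico b a]
  congr 1
  ext s
  simp only [mem_Ico, mem_filter, mem_range]
  omega

theorem Monovary.sum_tsub_le_sum_tsub_comp_perm {ι : Type*} [Fintype ι] {f g : ι → ℕ}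
    (hfg : Monovary f g) (σ : Perm ι) :
    ∑ i, (f i - g i) ≤ ∑ i, (f i - g (σ i)) := by
  have hf : ∀ i, f i ≤ ∑ j, f j := fun i => single_le_sum (fun j _ => Nat.zero_le _) (mem_univ i)
  simp only [tsub_eq_sum_range_ite_mul_ite _ (hf _)]
  refine sum_comm.trans_le ((sum_le_sum fun s _ => ?_).trans_eq sum_comm)
  refine Antivary.sum_mul_le_sum_mul_comp_perm fun i j hij => ?_
  have : g j < g i := by split_ifs at hij <;> omega
  have := hfg this
  split_ifs <;> omega

/-- Under round-robin firing, after `m` steps `u` has received `m % n` chips in the current round,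
and has already fired in it iff `u < m % n`. -/
theorem fireIterK_ofNat_add_ite {n : ℕ} [NeZero n] {d : Fin n → ℕ}
    (hd : ∀ v : Fin n, n - 1 ≤ d v + v) (m : ℕ) (u : Fin n) :
    fireIterK n d (Fin.ofNat n) m u + (if (u : ℕ) < m % n then n else 0) = d u + m % n := by
  induction m with
  | zero => simp [fireIterK]
  | succ m ih =>
    have := Nat.mod_lt m (NeZero.pos n)
    have hstep : (m + 1) % n = if m % n + 1 = n then 0 else m % n + 1 := by
      rw [← Nat.mod_add_mod]
      split_ifs with h
      · rw [h, Nat.mod_self]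
      · exact Nat.mod_eq_of_lt (by omega)
    simp only [fireIterK, fireK]
    rw [hstep]
    by_cases hu : u = Fin.ofNat n m
    · subst hu
      have := hd (Fin.ofNat n m)
      simp only [Fin.val_ofNat, lt_self_iff_false, ↓reduceIte, add_zero] at ih this ⊢
      split_ifs <;> omega
    · have hu' : (u : ℕ) ≠ m % n := fun h => hu (Fin.ext (h.trans (Fin.val_ofNat n m).symm))
      rw [if_neg hu]
      have := u.isLt
      split_ifs at ih ⊢ <;> omega

theorem volatileK_of_forall_le_add {n : ℕ} [NeZero n] {d : Fin n → ℕ}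
    (hd : ∀ v : Fin n, n - 1 ≤ d v + v) : VolatileK n d := by
  refine ⟨Fin.ofNat n, fun m => ?_⟩
  have hm := fireIterK_ofNat_add_ite hd m (Fin.ofNat n m)
  have := hd (Fin.ofNat n m)
  simp only [Fin.val_ofNat, lt_self_iff_false, ↓reduceIte, add_zero] at hm this
  omega

theorem fireIterK_add_mul_card {n : ℕ} {c : Fin n → ℕ} {f : ℕ → Fin n}
    (hf : ∀ m, n - 1 ≤ fireIterK n c f m (f m)) (m : ℕ) (u : Fin n) :
    fireIterK n c f m u + n * #{i ∈ range m | f i = u} = c u + m := by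
  induction m with
  | zero => simp [fireIterK]
  | succ m ih =>
    have hm := hf m
    rw [range_add_one, filter_insert]
    simp only [fireIterK, fireK]
    by_cases h : f m = u
    · subst h
      rw [if_pos rfl, if_pos rfl, card_insert_of_notMem (by simp)]
      have := (f m).pos
      rw [mul_add_one]
      generalize n * #{i ∈ range m | f i = f m} = k at ih ⊢
      omega
    · rw [if_neg h, if_neg (Ne.symm h)]
      omega

theorem VolatileK.exists_perm_le_add {n : ℕ} {d : Fin n → ℕ} (hvol : VolatileK n d)
    (hd : ∀ v, d v ≤ n - 1) : ∃ σ : Perm (Fin n), ∀ j : Fin n, n - 1 ≤ d (σ j) + j := by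
  obtain ⟨f, hf⟩ := hvol
  -- a vertex that has fired before time `b < n` holds at most `(n - 1) + b - n < n - 1` chips
  have hfirst : ∀ b < n, ∀ a < b, f a ≠ f b := by
    intro b hb a hab heq
    have hcount := fireIterK_add_mul_card hf b (f b)
    have hfired : n ≤ n * #{i ∈ range b | f i = f b} :=
      Nat.le_mul_of_pos_right n (card_pos.mpr ⟨a, by simp [hab, heq]⟩)
    have := hf b
    have := hd (f b)
    omega
  have hinj : Function.Injective fun j : Fin n => f j := by
    intro a b hab
    by_contra hne
    rcases Fin.lt_or_lt_of_ne hne with h | h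
    · exact hfirst b b.isLt a h hab
    · exact hfirst a a.isLt b h hab.symm
  refine ⟨ofBijective _ (Finite.injective_iff_bijective.mp hinj), fun j => ?_⟩
  have hcount := fireIterK_add_mul_card hf j (f j)
  rw [card_eq_zero.mpr (filter_eq_empty_iff.mpr fun i hi => hfirst j j.isLt i (mem_range.mp hi)),
    mul_zero, add_zero] at hcount
  have := hf j
  simp only [ofBijective_apply]
  omega

/-- In 0-indexed form `cᵢ ≤ n - i - 1` reads `c i + i + 2 ≤ n`, and `max (n - i - cᵢ) 0` is the
truncated `n - 1 - i - c i`. -/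
theorem stmt17 (n : ℕ) (hn : 2 ≤ n) (c : Fin n → ℕ) (hsort : Antitone c)
    (hc : ∀ v, c v ≤ n - 1) (hnvol : ¬ VolatileK n c) :
    (∃ i : Fin n, c i + (i : ℕ) + 2 ≤ n) ∧
    IsLeast
      {k : ℕ | ∃ d : Fin n → ℕ, (∀ v, c v ≤ d v) ∧ (∀ v, d v ≤ n - 1) ∧
        VolatileK n d ∧ k = ∑ v, (d v - c v)}
      (∑ i : Fin n, (n - 1 - (i : ℕ) - c i)) := by
  have : NeZero n := ⟨by omega⟩
  refine ⟨?_, ⟨fun v => max (c v) (n - 1 - v), ?_⟩, ?_⟩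
  · by_contra! h
    exact hnvol (volatileK_of_forall_le_add fun v => by have := h v; omega)
  · refine ⟨fun v => le_max_left _ _, fun v => max_le (hc v) (by omega),
      volatileK_of_forall_le_add fun v => by omega, sum_congr rfl fun v _ => by dsimp only; omega⟩
  · rintro _ ⟨d, hcd, hd, hvol, rfl⟩
    obtain ⟨σ, hσ⟩ := hvol.exists_perm_le_add hd
    have hmono : Monovary (fun i : Fin n => n - 1 - (i : ℕ)) c :=
      Antitone.monovary (fun i j hij => Nat.sub_le_sub_left (Fin.le_def.mp hij) _) hsort
    calc ∑ i : Fin n, (n - 1 - (i : ℕ) - c i)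
        ≤ ∑ j : Fin n, (n - 1 - (j : ℕ) - c (σ j)) := hmono.sum_tsub_le_sum_tsub_comp_perm σ
      _ ≤ ∑ j, (d (σ j) - c (σ j)) :=
          sum_le_sum fun j _ => by have := hσ j; have := hcd (σ j); omega
      _ = ∑ v, (d v - c v) := Equiv.sum_comp σ fun v => d v - c v
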